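/- Assume b > (n−1)a > 0 and write b = ra + b' with 0 ≤ b' < a (so r ≥ n−1). Let (λ,μ) be a bipartition of n with λ ≠ ∅ and set l := |λ| ≤ N + r. Then λ_l + N + r − l ≥ μ_1 + N − 1, and consequently the l largest entries of the multiset Z^N_{a,b}(λ,μ) (entries (λ_i+N+r−i)a+b' for i ≤ N+r and (μ_j+N−j)a for j ≤ N) are exactly (λ_i + N + r − i)a + b' for 1 ≤ i ≤ l. -/

import Mathlib

/-!
From `(n - 1) a < b = r a + b' < (r + 1) a` we get `n ≤ r + 1`, hence
`μ₁ + |λ| ≤ |μ| + |λ| = n ≤ r + 1 ≤ λ_l + r + 1`. This bound puts every `μ`-entry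
`(μ_j + N - j) a` below the `l`-th `λ`-entry; since the `λ`-entries decrease in `i`, the first
`l` of them are the `l` largest entries of `Z`.
-/

/-- Partial sum of the first `d` parts of a partition (given as a function). -/
def psum (f : ℕ → ℕ) (d : ℕ) : ℕ := ∑ i ∈ Finset.range d, f i

/-- Decreasing enumeration of a multiset of natural numbers. -/
def dsort (M : Multiset ℕ) : List ℕ := (M.sort (· ≤ ·)).reverse

/-- Lusztig's multiset `Z^N_{a,b}(λ,μ)` (with `b = r·a + b'`), 0-indexed. -/
def Zab (a b' r N : ℕ) (l m : ℕ → ℕ) : Multiset ℕ :=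
  ((Finset.range (N + r)).val.map fun i => (l i + (N + r - 1 - i)) * a + b') +
  ((Finset.range N).val.map fun j => (m j + (N - 1 - j)) * a)

lemma coe_dsort (M : Multiset ℕ) : (dsort M : Multiset ℕ) = M := by
  rw [dsort, Multiset.coe_reverse, Multiset.sort_eq]

lemma pairwise_dsort (M : Multiset ℕ) : (dsort M).Pairwise (· ≥ ·) :=
  List.pairwise_reverse.mpr (Multiset.pairwise_sort M (· ≤ ·))

lemma dsort_coe_add_eq_append {lp : List ℕ} {R : Multiset ℕ} (hlp : lp.Pairwise (· ≥ ·))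
    (hle : ∀ x ∈ R, ∀ y ∈ lp, x ≤ y) : dsort (↑lp + R) = lp ++ dsort R := by
  refine List.Perm.eq_of_pairwise' (pairwise_dsort _) ?_ ?_
  · refine List.pairwise_append.mpr ⟨hlp, pairwise_dsort R, fun y hy x hx => hle x ?_ y hy⟩
    rw [← coe_dsort R]
    exact Multiset.mem_coe.mpr hx
  · rw [← Multiset.coe_eq_coe, coe_dsort, ← Multiset.coe_add, coe_dsort]

lemma take_dsort_map_range_add {f : ℕ → ℕ} {L K : ℕ} {S : Multiset ℕ} (hf : Antitone f)
    (hLK : L ≤ K) (hS : ∀ x ∈ S, ∀ i < L, x ≤ f i) :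
    (dsort ((Multiset.range K).map f + S)).take L = (List.range L).map f := by
  obtain ⟨K, rfl⟩ := Nat.exists_eq_add_of_le hLK
  have hsplit : (Multiset.range (L + K)).map f
      = ↑((List.range L).map f) + ↑((List.range K).map fun t => f (L + t)) := by
    rw [Multiset.range, List.range_add, Multiset.map_coe, List.map_append, List.map_map,
      ← Multiset.coe_add]
    rfl
  have hpairwise : ((List.range L).map f).Pairwise (· ≥ ·) :=
    List.pairwise_map.mpr (List.pairwise_lt_range.imp fun hij => hf hij.le)
  have hle : ∀ x ∈ ↑((List.range K).map fun t => f (L + t)) + S, ∀ y ∈ (List.range L).map f,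
      x ≤ y := by
    simp only [List.mem_map, List.mem_range]
    rintro x hx _ ⟨i, hi, rfl⟩
    rcases Multiset.mem_add.mp hx with hx | hx
    · obtain ⟨t, -, rfl⟩ := List.mem_map.mp (Multiset.mem_coe.mp hx)
      exact hf (by omega)
    · exact hS x hx i hi
  rw [hsplit, add_assoc, dsort_coe_add_eq_append hpairwise hle,
    List.take_left' (by simp)]

lemma le_succ_of_pred_mul_lt {n a r b' : ℕ} (hb' : b' < a) (h : (n - 1) * a < r * a + b') :
    n ≤ r + 1 := by
  have : (n - 1) * a < (r + 1) * a := by rw [add_one_mul]; omega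
  have := Nat.lt_of_mul_lt_mul_right this
  omega

lemma apply_zero_le_psum {m : ℕ → ℕ} {N : ℕ} (hm : ∀ j, N ≤ j → m j = 0) : m 0 ≤ psum m N := by
  rcases Nat.eq_zero_or_pos N with rfl | hN
  · simp [hm 0 le_rfl]
  · exact Finset.single_le_sum (fun i _ => Nat.zero_le (m i)) (Finset.mem_range.mpr hN)

lemma antitone_add_sub_mul_add {l : ℕ → ℕ} (hl : Antitone l) (K a c : ℕ) :
    Antitone fun i => (l i + (K - i)) * a + c := fun _ _ hij =>
  Nat.add_le_add_right
    (Nat.mul_le_mul_right a (Nat.add_le_add (hl hij) (Nat.sub_le_sub_left hij K))) c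

lemma mu_entry_le_lambda_entry {l m : ℕ → ℕ} {a b' r N L i j : ℕ} (hl : Antitone l)
    (hm : Antitone m) (hkey : m 0 + L ≤ l (L - 1) + r + 1) (hi : i < L) (hj : j < N) :
    (m j + (N - 1 - j)) * a ≤ (l i + (N + r - 1 - i)) * a + b' := by
  have hmj : m j ≤ m 0 := hm (Nat.zero_le j)
  have hli : l (L - 1) ≤ l i := hl (by omega)
  have : m j + (N - 1 - j) ≤ l i + (N + r - 1 - i) := by omega
  exact le_add_right (Nat.mul_le_mul_right a this)

theorem asymptotic_largest_entries_general (n a b r b' N : ℕ)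
    (hab : (n - 1) * a < b)
    (hbr : b = r * a + b') (hb'a : b' < a)
    (l m : ℕ → ℕ) (hl : Antitone l) (hm : Antitone m)
    (hmN : ∀ j, N ≤ j → m j = 0)
    (hn : psum l (N + r) + psum m N = n)
    (L : ℕ) (hL : L = psum l (N + r)) (hLN : L ≤ N + r) :
    m 0 + L ≤ l (L - 1) + r + 1 ∧
    (dsort (Zab a b' r N l m)).take L
      = (List.range L).map (fun i => (l i + (N + r - 1 - i)) * a + b') := by
  have hnr : n ≤ r + 1 := le_succ_of_pred_mul_lt hb'a (hbr ▸ hab)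
  have hm0 : m 0 ≤ psum m N := apply_zero_le_psum hmN
  have hkey : m 0 + L ≤ l (L - 1) + r + 1 := by omega
  refine ⟨hkey, take_dsort_map_range_add (antitone_add_sub_mul_add hl _ _ _) hLN ?_⟩
  simp only [Finset.range_val, Multiset.mem_map, Multiset.mem_range]
  rintro _ ⟨j, hj, rfl⟩ i hi
  exact mu_entry_le_lambda_entry hl hm hkey hi hj

theorem asymptotic_largest_entries (n a b r b' N : ℕ)
    (hna : 0 < (n - 1) * a) (hab : (n - 1) * a < b)
    (hbr : b = r * a + b') (hb'a : b' < a)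
    (l m : ℕ → ℕ) (hl : Antitone l) (hm : Antitone m)
    (hlN : ∀ i, N + r ≤ i → l i = 0) (hmN : ∀ j, N ≤ j → m j = 0)
    (hn : psum l (N + r) + psum m N = n)
    (L : ℕ) (hL : L = psum l (N + r)) (hL1 : 1 ≤ L) (hLN : L ≤ N + r) :
    m 0 + L ≤ l (L - 1) + r + 1 ∧
    (dsort (Zab a b' r N l m)).take L
      = (List.range L).map (fun i => (l i + (N + r - 1 - i)) * a + b') :=
  asymptotic_largest_entries_general n a b r b' N hab hbr hb'a l m hl hm hmN hn L hL hLN
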